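/- Let G be a connected finite simple graph of order n ≥ 5 and let F(n) = C(n−2,2) + 2 if n ≥ 5 and n ∉ {6,8}, F(6) = 9, F(8) = 18. If the number of edges of G satisfies |E(G)| > F(n), then for every subset S ⊆ V(G) the number of isolated vertices of G − S satisfies i(G−S) ≤ (3/2)|S| (equivalently, G has a {P₂,C₃,P₅,𝒯(3)}-factor). -/

import Mathlib

open Finset

/-- The join `G ∨g H` of two graphs: the disjoint union together with all edges
between the two parts. -/
def SimpleGraph.gjoin {α β : Type*} (G : SimpleGraph α) (H : SimpleGraph β) :
    SimpleGraph (α ⊕ β) where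
  Adj u v := match u, v with
    | Sum.inl u, Sum.inl v => G.Adj u v
    | Sum.inr u, Sum.inr v => H.Adj u v
    | _, _ => True
  symm := ⟨fun u v => match u, v with
    | Sum.inl u, Sum.inl v => G.adj_symm
    | Sum.inr u, Sum.inr v => H.adj_symm
    | Sum.inl _, Sum.inr _ | Sum.inr _, Sum.inl _ => fun _ => trivial⟩
  loopless := ⟨fun u => by cases u <;> simp⟩

infixl:60 " ∨g " => SimpleGraph.gjoin

/-- The `A_α`-matrix `α • D(G) + (1-α) • A(G)` of a graph `G`. -/
noncomputable def aAlphaMatrix {V : Type*} [Fintype V] [DecidableEq V]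
    (α : ℝ) (G : SimpleGraph V) : Matrix V V ℝ := by
  classical
  exact α • Matrix.diagonal (fun v => (G.degree v : ℝ)) + (1 - α) • G.adjMatrix ℝ

/-- The `A_α`-spectral radius `ρ_α(G)`: the largest eigenvalue of `A_α(G)`. -/
noncomputable def rhoAlpha {V : Type*} [Fintype V] [DecidableEq V]
    (α : ℝ) (G : SimpleGraph V) : ℝ :=
  sSup (spectrum ℝ (aAlphaMatrix α G))

/-- The signless Laplacian matrix `Q(G) = D(G) + A(G)`. -/
noncomputable def signlessLaplacian {V : Type*} [Fintype V] [DecidableEq V]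
    (G : SimpleGraph V) : Matrix V V ℝ := by
  classical
  exact Matrix.diagonal (fun v => (G.degree v : ℝ)) + G.adjMatrix ℝ

/-- `q(G)`: the largest eigenvalue of the signless Laplacian matrix of `G`. -/
noncomputable def qIndex {V : Type*} [Fintype V] [DecidableEq V]
    (G : SimpleGraph V) : ℝ :=
  sSup (spectrum ℝ (signlessLaplacian G))

/-- The number of edges (the size) of a graph. -/
noncomputable def edgeCount {V : Type*} [Fintype V] [DecidableEq V]
    (G : SimpleGraph V) : ℕ := by
  classical
  exact G.edgeFinset.card

/-- `i(G - S)`: the number of isolated vertices of the graph obtained from `G`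
by deleting the vertices of `S` together with all edges incident to `S`. -/
noncomputable def isolGminus {V : Type*} [Fintype V] [DecidableEq V]
    (G : SimpleGraph V) (S : Finset V) : ℕ := by
  classical
  exact (Finset.univ.filter (fun v => v ∉ S ∧ ∀ u, G.Adj v u → u ∈ S)).card

/-- `F(n)`: the edge bound from Theorem 1.1. -/
def Fbound (n : ℕ) : ℕ :=
  if n = 6 then 9 else if n = 8 then 18 else (n - 2).choose 2 + 2

/-- `f(α)`: the order bound from Theorem 1.2. -/
noncomputable def fAlpha (α : ℝ) : ℝ :=
  if α ≤ 1 / 2 then 20 else if α ≤ 5 / 7 then 25 else 7 / (1 - α) + 3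

/-! Suppose `i(G - S) > 3|S|/2` and let `I` be the set of isolated vertices of `G - S`. A vertex of
`I` has a neighbour, all of them in `S`, so `S ≠ ∅`; and every edge lies inside `V \ I` or joins
`I` to `S`, whence `2|E(G)| ≤ (n - i)(n - i - 1) + 2is` with `i = |I|`, `s = |S|`. Under
`2i ≥ 3s + 1` and `i + s ≤ n` this is at most `2F(n)`: for `n ≥ 10` by a quadratic estimate whose
extremal case `i = 2`, `s = 1` is `K_{n-2}` with two pendant vertices at one vertex, and for
`5 ≤ n ≤ 9` by a finite check. -/

theorem two_mul_Fbound_of_ne {n : ℕ} (h6 : n ≠ 6) (h8 : n ≠ 8) :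
    2 * Fbound n = (n - 2) * (n - 3) + 4 := by
  rw [Fbound, if_neg h6, if_neg h8, mul_add, mul_comm, Nat.choose_two_right,
    Nat.div_mul_cancel (Nat.even_mul_pred_self _).two_dvd, Nat.sub_sub]

theorem int_edge_bound_le_of_ten_le {N M s : ℤ} (hN : 10 ≤ N) (hs : 1 ≤ s) (hsM : s ≤ M)
    (h : 3 * s + 1 ≤ 2 * (N - M)) : M * (M - 1) + 2 * (N - M) * s ≤ (N - 2) * (N - 3) + 4 := by
  rcases le_or_gt (5 * M) (2 * N - 1) with hA | hB
  · nlinarith [mul_nonneg (by linarith : (0:ℤ) ≤ M - 1) (by linarith : (0:ℤ) ≤ 2*N - 1 - 5*M),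
      mul_nonneg (by linarith : (0:ℤ) ≤ N - M) (by linarith : (0:ℤ) ≤ M - s),
      sq_nonneg (2*N - 5*M), sq_nonneg (N - M - s)]
  · nlinarith [mul_nonneg (by linarith : (0:ℤ) ≤ N - M - 2) (by linarith : (0:ℤ) ≤ 5*M - 2*N),
      mul_nonneg (by linarith : (0:ℤ) ≤ N - M) (by linarith : (0:ℤ) ≤ 2*(N-M) - 1 - 3*s),
      sq_nonneg (2*N - 5*M), sq_nonneg (N - 10)]

theorem edge_bound_le_two_mul_Fbound {n i s : ℕ} (hn : 5 ≤ n) (hs : 1 ≤ s)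
    (hsi : 3 * s + 1 ≤ 2 * i) (hisn : i + s ≤ n) :
    (n - i) * (n - i - 1) + 2 * (i * s) ≤ 2 * Fbound n := by
  rcases le_or_gt n 9 with hn9 | hn9
  · have hi : i ≤ 9 := by omega
    interval_cases n <;> interval_cases i <;> norm_num [Fbound, Nat.choose] <;> omega
  · rw [two_mul_Fbound_of_ne (by omega) (by omega)]
    have := int_edge_bound_le_of_ten_le (N := n) (M := n - i) (s := s)
      (by omega) (by omega) (by omega) (by omega)
    zify [(by omega : i ≤ n), (by omega : 1 ≤ n - i), (by omega : 2 ≤ n), (by omega : 3 ≤ n)]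
    linarith

theorem two_mul_edgeCount_le {V : Type*} [Fintype V] [DecidableEq V] (G : SimpleGraph V)
    {I S : Finset V} (hI : ∀ v ∈ I, ∀ u, G.Adj v u → u ∈ S) :
    2 * edgeCount G ≤ #Iᶜ * (#Iᶜ - 1) + 2 * (#I * #S) := by
  classical
  have hsub : ({p | G.Adj p.1 p.2} : Finset (V × V)) ⊆ Iᶜ.offDiag ∪ I ×ˢ S ∪ S ×ˢ I := by
    rintro ⟨u, v⟩ huv
    simp only [mem_filter, mem_univ, true_and] at huv
    simp only [mem_union, mem_offDiag, mem_product, mem_compl]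
    by_cases hu : u ∈ I
    · exact .inl (.inr ⟨hu, hI u hu v huv⟩)
    by_cases hv : v ∈ I
    · exact .inr ⟨hI v hv u huv.symm, hv⟩
    · exact .inl (.inl ⟨hu, hv, huv.ne⟩)
  calc 2 * edgeCount G = #({p | G.Adj p.1 p.2} : Finset (V × V)) := by
        rw [← G.two_mul_card_edgeFinset]; unfold edgeCount; congr!
    _ ≤ #(Iᶜ.offDiag ∪ I ×ˢ S ∪ S ×ˢ I) := card_le_card hsub
    _ ≤ #Iᶜ.offDiag + #(I ×ˢ S) + #(S ×ˢ I) :=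
        (card_union_le _ _).trans (Nat.add_le_add_right (card_union_le _ _) _)
    _ = #Iᶜ * (#Iᶜ - 1) + 2 * (#I * #S) := by
        rw [offDiag_card, card_product, card_product, Nat.mul_sub_one]; ring

theorem size_condition_factor {V : Type*} [Fintype V] [DecidableEq V]
    (G : SimpleGraph V) (hconn : G.Connected) (n : ℕ) (hcard : Fintype.card V = n)
    (hn : 5 ≤ n) (hsize : Fbound n < edgeCount G) :
    ∀ S : Finset V, (isolGminus G S : ℝ) ≤ 3 / 2 * S.card := by
  classical
  intro S
  set I : Finset V := {v | v ∉ S ∧ ∀ u, G.Adj v u → u ∈ S}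
  have hIS : ∀ v ∈ I, ∀ u, G.Adj v u → u ∈ S := fun v hv => (mem_filter.1 hv).2.2
  have hisol : isolGminus G S = #I := by unfold isolGminus; congr!
  rw [hisol]
  by_contra! hlt
  have hgt : 3 * #S + 1 ≤ 2 * #I := by
    have : (3 * #S : ℝ) < 2 * #I := by linarith
    exact_mod_cast this
  have hS : 1 ≤ #S := by
    obtain ⟨v, hv⟩ : I.Nonempty := card_pos.1 (by omega)
    have : Nontrivial V := Fintype.one_lt_card_iff_nontrivial.1 (by omega)
    obtain ⟨u, hvu⟩ := hconn.preconnected.exists_adj_of_nontrivial v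
    exact card_pos.2 ⟨u, hIS v hv u hvu⟩
  have hdisj : Disjoint I S := disjoint_left.2 fun v hv => (mem_filter.1 hv).2.1
  have hcardIS : #I + #S ≤ n := hcard ▸ card_union_of_disjoint hdisj ▸ card_le_univ _
  have hedges := two_mul_edgeCount_le G hIS
  rw [card_compl, hcard] at hedges
  have := edge_bound_le_two_mul_Fbound hn hS hgt hcardIS
  omega
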